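/- For every n > 0, the map sending a sequence (h_1,…,h_k) with 1 ≤ k ≤ n, h_i ≥ i for all i ∈ [k], h_1 ≤ h_2 ≤ … ≤ h_{k−1} ≤ 2n − k, and h_k ∈ {2n − k, 2n − k + 1} to the word u^{h_1} r u^{h_2 − h_1} r ⋯ r u^{h_k − h_{k−1}} if h_k = 2n − k + 1, and to the word u^{h_1} r u^{h_2 − h_1} r ⋯ r u^{h_k − h_{k−1}} r if h_k = 2n − k (with h_0 := 0), is a bijection from the set of such sequences onto the set of Dyck words of type B of semilength n. -/

import Mathlib

/-- A Dyck word of type B of semilength `n`: a word of length `2n` over `{u, r}`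
(`true` = `u`, `false` = `r`) every prefix of which contains at least as many
`u`'s as `r`'s. -/
def IsDyckWordB (n : ℕ) (w : List Bool) : Prop :=
  w.length = 2 * n ∧ ∀ ℓ : ℕ, (w.take ℓ).count false ≤ (w.take ℓ).count true

/-- Height sequences of type B (written 0-indexed): lists `(h_1, …, h_k)` with
`1 ≤ k ≤ n`, `h_i ≥ i` for `i ∈ [k]`, `h_1 ≤ h_2 ≤ … ≤ h_{k-1} ≤ 2n - k`, and
`h_k ∈ {2n - k, 2n - k + 1}`. -/
def IsHeightSeqB (n : ℕ) (h : List ℕ) : Prop :=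
  1 ≤ h.length ∧ h.length ≤ n ∧
    (∀ i < h.length, i + 1 ≤ h.getD i 0) ∧
    (∀ i : ℕ, i + 2 < h.length → h.getD i 0 ≤ h.getD (i + 1) 0) ∧
    (2 ≤ h.length → h.getD (h.length - 2) 0 ≤ 2 * n - h.length) ∧
    (h.getD (h.length - 1) 0 = 2 * n - h.length ∨
      h.getD (h.length - 1) 0 = 2 * n - h.length + 1)

/-- `seqWord prev (a₁ :: … :: aₖ)` is the word
`u^{a₁ - prev} r u^{a₂ - a₁} r ⋯ r u^{aₖ - a_{k-1}} r` (with a trailing `r`). -/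
def seqWord : ℕ → List ℕ → List Bool
  | _, [] => []
  | prev, a :: rest => List.replicate (a - prev) true ++ false :: seqWord a rest

/-- The word associated to a sequence `(h_1, …, h_k)`: it is
`u^{h_1} r u^{h_2 - h_1} r ⋯ r u^{h_k - h_{k-1}}` if `h_k = 2n - k + 1`
(no trailing `r`), and `u^{h_1} r u^{h_2 - h_1} r ⋯ r u^{h_k - h_{k-1}} r`
if `h_k = 2n - k`. -/
def toWordB (n : ℕ) (h : List ℕ) : List Bool :=
  if h.getD (h.length - 1) 0 = 2 * n - h.length + 1 then (seqWord 0 h).dropLast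
  else seqWord 0 h


/-! Reading off, for each `r` of a word, the number of `u`'s before it (`heights 0`) turns a word
ending in `r` into a weakly increasing sequence, `seqWord 0` is the inverse reading, and under
it the ballot condition on prefixes becomes `h_i ≥ i`. A Dyck word of type B either ends in `r`,
or ends in `u` and becomes, after appending an `r`, a ballot word of length `2n + 1` ending in
`ur`. So `toWordB n` is this encoding of height sequences as closed ballot words followed by
truncation to length `2n`, and both steps are bijections. -/

def heights : ℕ → List Bool → List ℕ
  | _, [] => []
  | c, true :: w => heights (c + 1) w
  | c, false :: w => c :: heights c w

section Heights

variable (c : ℕ)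

@[simp]
lemma heights_nil : heights c [] = [] := rfl

@[simp]
lemma heights_true_cons (w : List Bool) : heights c (true :: w) = heights (c + 1) w := rfl

@[simp]
lemma heights_false_cons (w : List Bool) : heights c (false :: w) = c :: heights c w := rfl

lemma heights_append (w₁ w₂ : List Bool) :
    heights c (w₁ ++ w₂) = heights c w₁ ++ heights (c + w₁.count true) w₂ := by
  induction w₁ generalizing c with
  | nil => simp
  | cons b w ih => cases b <;> simp [ih, Nat.add_right_comm, Nat.add_assoc]

@[simp]
lemma heights_concat_true (w : List Bool) : heights c (w ++ [true]) = heights c w := by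
  simp [heights_append]

@[simp]
lemma heights_concat_false (w : List Bool) :
    heights c (w ++ [false]) = heights c w ++ [c + w.count true] := by
  simp [heights_append]

@[simp]
lemma length_heights (w : List Bool) : (heights c w).length = w.count false := by
  induction w generalizing c with
  | nil => rfl
  | cons b w ih => cases b <;> simp [ih]

lemma isChain_heights (w : List Bool) : (c :: heights c w).IsChain (· ≤ ·) := by
  induction w generalizing c with
  | nil => exact .singleton c
  | cons b w ih =>
    cases b
    · exact .cons_cons le_rfl (ih c)
    · have := ih (c + 1)
      rw [List.isChain_cons] at this ⊢
      exact ⟨fun y hy => (this.1 y hy).trans' c.le_succ, this.2⟩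

lemma getLastD_heights_le (w : List Bool) : (heights c w).getLastD c ≤ c + w.count true := by
  induction w using List.reverseRecOn with
  | nil => simp
  | append_singleton v b ih =>
    cases b
    · simp
    · rw [heights_concat_true, List.count_append, List.count_singleton_self]
      omega

lemma getLastD_heights_lt_iff (w : List Bool) :
    (heights c w).getLastD c < c + w.count true ↔ w.getLast? = some true := by
  induction w using List.reverseRecOn with
  | nil => simp
  | append_singleton v b _ =>
    cases b
    · simp
    · have := getLastD_heights_le c v
      rw [heights_concat_true, List.count_append, List.count_singleton_self, List.getLast?_concat]
      simp only [iff_true]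
      omega

end Heights

lemma ballot_heights_iff {c d : ℕ} (hdc : d ≤ c) (w : List Bool) :
    (∀ ℓ, d + (w.take ℓ).count false ≤ c + (w.take ℓ).count true) ↔
      ∀ i < (heights c w).length, d + i + 1 ≤ (heights c w).getD i 0 := by
  induction w generalizing c d with
  | nil => simpa using hdc
  | cons b w ih =>
    rw [← Nat.and_forall_add_one]
    cases b
    · simp only [List.take_zero, List.take_succ_cons, List.count_nil, List.count_cons_self,
        List.count_cons_of_ne Bool.false_ne_true, heights_false_cons, List.length_cons,
        Nat.forall_lt_succ_left', List.getD_cons_zero, List.getD_cons_succ]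
      rcases hdc.eq_or_lt with rfl | hlt
      · exact iff_of_false (fun h => by simpa using h.2 0) (fun h => by simpa using h.1)
      · have key := ih (d := d + 1) hlt
        constructor
        · rintro ⟨-, h⟩
          refine ⟨hlt, fun i hi => ?_⟩
          have := key.1 (fun ℓ => by have := h ℓ; omega) i hi
          omega
        · rintro ⟨-, h⟩
          refine ⟨by omega, fun ℓ => ?_⟩
          have := key.2 (fun i hi => by have := h i hi; omega) ℓ
          omega
    · simp only [List.take_zero, List.take_succ_cons, List.count_nil, List.count_cons_self,
        List.count_cons_of_ne Bool.false_ne_true.symm, heights_true_cons]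
      rw [← ih (hdc.trans c.le_succ)]
      constructor
      · rintro ⟨-, h⟩ ℓ
        have := h ℓ
        omega
      · intro h
        exact ⟨hdc, fun ℓ => by have := h ℓ; omega⟩

section SeqWord

variable (c : ℕ)

@[simp]
lemma seqWord_nil : seqWord c [] = [] := rfl

lemma seqWord_cons (a : ℕ) (h : List ℕ) :
    seqWord c (a :: h) = List.replicate (a - c) true ++ false :: seqWord a h := rfl

lemma seqWord_concat (h : List ℕ) (a : ℕ) :
    seqWord c (h ++ [a]) = seqWord c h ++ List.replicate (a - h.getLastD c) true ++ [false] := by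
  induction h generalizing c with
  | nil => rfl
  | cons b h ih =>
    simp only [List.cons_append, seqWord_cons, ih, List.getLastD_cons, List.append_assoc]

lemma exists_seqWord_eq_concat_false {h : List ℕ} (hh : h ≠ []) :
    ∃ v, seqWord c h = v ++ [false] := by
  obtain ⟨g, a, rfl⟩ := (List.eq_nil_or_concat h).resolve_left hh
  exact ⟨_, by rw [List.concat_eq_append, seqWord_concat]⟩

lemma heights_replicate_true_append (m : ℕ) (w : List Bool) :
    heights c (List.replicate m true ++ w) = heights (c + m) w := by
  induction m generalizing c with
  | zero => rfl
  | succ m ih =>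
    rw [List.replicate_succ, List.cons_append, heights_true_cons, ih, Nat.add_right_comm,
      Nat.add_assoc]

lemma heights_seqWord {h : List ℕ} (hh : (c :: h).IsChain (· ≤ ·)) :
    heights c (seqWord c h) = h := by
  induction h generalizing c with
  | nil => rfl
  | cons a h ih =>
    rw [List.isChain_cons_cons] at hh
    rw [seqWord_cons, heights_replicate_true_append, Nat.add_sub_cancel' hh.1, heights_false_cons,
      ih a hh.2]

lemma seqWord_heights_append_replicate (w : List Bool) :
    seqWord c (heights c w) ++
      List.replicate (c + w.count true - (heights c w).getLastD c) true = w := by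
  induction w using List.reverseRecOn with
  | nil => simp
  | append_singleton v b ih =>
    cases b
    · rw [heights_concat_false, seqWord_concat, ih, List.getLastD_concat]
      simp
    · have := getLastD_heights_le c v
      rw [heights_concat_true, List.count_append, List.count_singleton_self, ← Nat.add_assoc,
        Nat.sub_add_comm this, List.replicate_succ', ← List.append_assoc, ih]

lemma seqWord_heights_concat_false (v : List Bool) :
    seqWord c (heights c (v ++ [false])) = v ++ [false] := by
  rw [heights_concat_false, seqWord_concat, seqWord_heights_append_replicate]

end SeqWord

def IsBallot (w : List Bool) : Prop :=
  ∀ ℓ, (w.take ℓ).count false ≤ (w.take ℓ).count true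

section Ballot

variable {w : List Bool}

lemma isBallot_iff_heights :
    IsBallot w ↔ ∀ i < (heights 0 w).length, i + 1 ≤ (heights 0 w).getD i 0 := by
  simpa only [IsBallot, Nat.zero_add] using ballot_heights_iff (c := 0) le_rfl w

lemma IsBallot.take (hw : IsBallot w) (m : ℕ) : IsBallot (w.take m) := fun ℓ => by
  rw [List.take_take]
  exact hw _

lemma IsBallot.count_false_lt {v : List Bool} (hv : IsBallot (v ++ [false])) :
    v.count false < v.count true := by
  have := hv (v.length + 1)
  rw [List.take_of_length_le (by simp)] at this
  simp at this
  omega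

lemma IsBallot.concat_false (hw : IsBallot w) (hlt : w.count false < w.count true) :
    IsBallot (w ++ [false]) := by
  intro ℓ
  rcases le_or_gt ℓ w.length with hℓ | hℓ
  · rw [List.take_append_of_le_length hℓ]
    exact hw ℓ
  · rw [List.take_of_length_le (by simp; omega)]
    simpa using hlt

end Ballot

def IsClosedDyckB (n : ℕ) (W : List Bool) : Prop :=
  W.getLast? = some false ∧ IsBallot W ∧
    (W.length = 2 * n ∨ W.length = 2 * n + 1 ∧ W.dropLast.getLast? = some true)

def closeWord (w : List Bool) : List Bool :=
  if w.getLast? = some true then w ++ [false] else w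

section CloseWord

variable {n : ℕ}

lemma IsClosedDyckB.take_isDyckWordB {W : List Bool} (hW : IsClosedDyckB n W) :
    IsDyckWordB n (W.take (2 * n)) := by
  obtain ⟨-, hbal, hlen⟩ := hW
  exact ⟨by simp; omega, hbal.take _⟩

lemma IsClosedDyckB.closeWord_take {W : List Bool} (hW : IsClosedDyckB n W) :
    closeWord (W.take (2 * n)) = W := by
  obtain ⟨hlast, -, hlen | ⟨hlen, hdrop⟩⟩ := hW
  · rw [List.take_of_length_le hlen.le, closeWord, if_neg (by simp [hlast])]
  · rw [show 2 * n = W.length - 1 by omega, ← List.dropLast_eq_take, closeWord, if_pos hdrop,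
      List.dropLast_append_getLast? _ hlast]

lemma IsDyckWordB.take_closeWord {w : List Bool} (hw : IsDyckWordB n w) :
    (closeWord w).take (2 * n) = w := by
  unfold closeWord
  split_ifs <;> simp [hw.1]

lemma IsDyckWordB.isClosedDyckB_closeWord (hn : 0 < n) {w : List Bool} (hw : IsDyckWordB n w) :
    IsClosedDyckB n (closeWord w) := by
  obtain ⟨hlen, (hbal : IsBallot w)⟩ := hw
  obtain ⟨v, b, rfl⟩ :=
    (List.eq_nil_or_concat w).resolve_left (by rintro rfl; simp at hlen; omega)
  rw [List.concat_eq_append] at hlen hbal ⊢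
  cases b
  · rw [closeWord, if_neg (by simp)]
    exact ⟨List.getLast?_concat, hbal, Or.inl hlen⟩
  · have hlt : (v ++ [true]).count false < (v ++ [true]).count true := by
      have := hbal v.length
      simp at this ⊢
      omega
    simp only [closeWord, List.getLast?_concat, if_true]
    exact ⟨List.getLast?_concat, hbal.concat_false hlt,
      Or.inr ⟨by simp at hlen ⊢; omega, by simp⟩⟩

lemma bijOn_take_isClosedDyckB (hn : 0 < n) :
    Set.BijOn (List.take (2 * n)) {W | IsClosedDyckB n W} {w | IsDyckWordB n w} :=
  Set.InvOn.bijOn ⟨fun _ hW => hW.closeWord_take, fun _ hw => IsDyckWordB.take_closeWord hw⟩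
    (fun _ hW => hW.take_isDyckWordB) (fun _ hw => IsDyckWordB.isClosedDyckB_closeWord hn hw)

end CloseWord

section HeightSeq

variable {n : ℕ}

lemma getD_length_sub_one (l : List ℕ) : l.getD (l.length - 1) 0 = l.getLastD 0 := by
  rw [List.getLastD_eq_getLast?, List.getLast?_eq_getElem?, List.getD_eq_getElem?_getD]

lemma isHeightSeqB_concat_iff (g : List ℕ) (a : ℕ) :
    IsHeightSeqB n (g ++ [a]) ↔
      g.length + 1 ≤ n ∧ (∀ i < (g ++ [a]).length, i + 1 ≤ (g ++ [a]).getD i 0) ∧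
        g.IsChain (· ≤ ·) ∧ g.getLastD 0 ≤ 2 * n - (g.length + 1) ∧
          (a = 2 * n - (g.length + 1) ∨ a = 2 * n - (g.length + 1) + 1) := by
  have hlast : (g ++ [a]).getD g.length 0 = a := by simp
  have hpen :
      (2 ≤ g.length + 1 → (g ++ [a]).getD (g.length + 1 - 2) 0 ≤ 2 * n - (g.length + 1)) ↔
        g.getLastD 0 ≤ 2 * n - (g.length + 1) := by
    rcases Nat.eq_zero_or_pos g.length with h | h
    · simp [List.length_eq_zero_iff.1 h]
    · rw [show g.length + 1 - 2 = g.length - 1 by omega, List.getD_append _ _ _ _ (by omega),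
        getD_length_sub_one]
      exact ⟨fun hp => hp (by omega), fun hp _ => hp⟩
  have hchain : g.IsChain (· ≤ ·) ↔
      ∀ i, i + 2 < g.length + 1 → (g ++ [a]).getD i 0 ≤ (g ++ [a]).getD (i + 1) 0 := by
    have hget : ∀ i (hi : i < g.length), (g ++ [a]).getD i 0 = g[i] := fun i hi => by
      rw [List.getD_append _ _ _ _ hi, List.getD_eq_getElem _ _ hi]
    rw [List.isChain_iff_getElem]
    refine forall_congr' fun i => ⟨fun h hi => ?_, fun h hi => ?_⟩
    · rw [hget i (by omega), hget (i + 1) (by omega)]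
      exact h (by omega)
    · have := h (by omega)
      rwa [hget i (by omega), hget (i + 1) (by omega)] at this
  simp only [IsHeightSeqB, List.length_append, List.length_singleton, Nat.add_sub_cancel,
    hlast, hpen, hchain, Nat.le_add_left, true_and]

lemma isHeightSeqB_heights_iff (v : List Bool) :
    IsHeightSeqB n (heights 0 (v ++ [false])) ↔ IsClosedDyckB n (v ++ [false]) := by
  have hbal := isBallot_iff_heights (w := v ++ [false])
  have hlt := getLastD_heights_lt_iff 0 v
  have hle := getLastD_heights_le 0 v
  have hlen := v.count_true_add_count_false
  have hchain : (heights 0 v).IsChain (· ≤ ·) := (isChain_heights 0 v).tail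
  rw [heights_concat_false] at hbal ⊢
  rw [isHeightSeqB_concat_iff, ← hbal]
  simp only [IsClosedDyckB, List.getLast?_concat, List.dropLast_concat, length_heights,
    List.length_append, List.length_singleton, hchain, true_and, Nat.zero_add] at hlt hle ⊢
  constructor
  · rintro ⟨hk, hb, hpen, hlast⟩
    exact ⟨hb, hlast.imp (fun _ => by omega) fun _ => ⟨by omega, hlt.1 (by omega)⟩⟩
  · rintro ⟨hb, hlen'⟩
    have := hb.count_false_lt
    refine ⟨by omega, hb, ?_, by omega⟩
    rcases hlen' with _ | ⟨_, hu⟩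
    · omega
    · have := hlt.2 hu
      omega

lemma IsHeightSeqB.isChain {h : List ℕ} (hh : IsHeightSeqB n h) :
    (0 :: h).IsChain (· ≤ ·) := by
  obtain ⟨g, a, rfl⟩ := (List.eq_nil_or_concat h).resolve_left (List.ne_nil_of_length_pos hh.1)
  rw [List.concat_eq_append] at hh ⊢
  rw [isHeightSeqB_concat_iff] at hh
  obtain ⟨-, -, hg, hpen, hlast⟩ := hh
  rw [← List.cons_append, List.isChain_append, List.isChain_cons]
  refine ⟨⟨fun _ _ => Nat.zero_le _, hg⟩, .singleton a, ?_⟩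
  simp only [List.getLast?_cons, Option.mem_def, Option.some.injEq, List.head?_cons, forall_eq']
  rw [← List.getLastD_eq_getLast?]
  omega

lemma length_seqWord {h : List ℕ} (hh : (0 :: h).IsChain (· ≤ ·)) :
    (seqWord 0 h).length = h.length + h.getLastD 0 := by
  rcases eq_or_ne h [] with rfl | hne
  · rfl
  obtain ⟨v, hv⟩ := exists_seqWord_eq_concat_false 0 hne
  have := v.count_true_add_count_false
  conv_rhs => rw [← heights_seqWord 0 hh, hv, heights_concat_false]
  simp [hv]
  omega

lemma IsHeightSeqB.toWordB_eq_take {h : List ℕ} (hh : IsHeightSeqB n h) :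
    toWordB n h = (seqWord 0 h).take (2 * n) := by
  have hlen := length_seqWord hh.isChain
  obtain ⟨hk, hkn, -, -, -, hlast⟩ := hh
  rw [getD_length_sub_one] at hlast
  rw [toWordB, getD_length_sub_one]
  split_ifs
  · rw [List.dropLast_eq_take, hlen]
    congr 1
    omega
  · rw [List.take_of_length_le (by omega)]

lemma IsClosedDyckB.exists_eq_concat_false {W : List Bool} (hW : IsClosedDyckB n W) :
    ∃ v, W = v ++ [false] :=
  ⟨W.dropLast, (List.dropLast_append_getLast? _ hW.1).symm⟩

lemma bijOn_seqWord_isHeightSeqB :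
    Set.BijOn (seqWord 0) {h | IsHeightSeqB n h} {W | IsClosedDyckB n W} := by
  refine Set.InvOn.bijOn (f' := heights 0) ⟨fun h hh => heights_seqWord 0 hh.isChain, ?_⟩ ?_ ?_
  · rintro W hW
    obtain ⟨v, rfl⟩ := hW.exists_eq_concat_false
    exact seqWord_heights_concat_false 0 v
  · intro h hh
    obtain ⟨v, hv⟩ := exists_seqWord_eq_concat_false 0 (List.ne_nil_of_length_pos hh.1)
    have hheights : heights 0 (v ++ [false]) = h := hv ▸ heights_seqWord 0 hh.isChain
    show IsClosedDyckB n (seqWord 0 h)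
    rwa [hv, ← isHeightSeqB_heights_iff, hheights]
  · rintro W hW
    obtain ⟨v, rfl⟩ := hW.exists_eq_concat_false
    exact (isHeightSeqB_heights_iff v).2 hW

end HeightSeq

theorem toWordB_bijOn (n : ℕ) (hn : 0 < n) :
    Set.BijOn (toWordB n) {h | IsHeightSeqB n h} {w | IsDyckWordB n w} :=
  ((bijOn_take_isClosedDyckB hn).comp bijOn_seqWord_isHeightSeqB).congr fun _ hh =>
    hh.toWordB_eq_take.symm
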